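/- arXiv:2201.02219 — 3 statements merged into one kernel-verified Lean document; each statement's English description precedes it below -/
import Mathlib

section
/- A subset A of a Banach lattice E satisfies A ⊆ [-u,u] + εB_E (where B_E is the closed unit ball) if and only if sup_{x∈A} ‖(|x| - u)⁺‖ ≤ ε. -/
/-
Clamping `x` into `[-u, u]` as `x ⊓ u ⊔ -u` leaves a remainder of modulus at most `(|x| - u)⁺`;
conversely, if `|a| ≤ u` then `(|a + b| - u)⁺ ≤ |b|`. Solidity of the norm turns both
order inequalities into norm inequalities.
-/

open Filter Topology Pointwise NormedSpace

variable {E F G : Type*}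

/-- A set is relatively weakly compact if its closure in the weak topology is compact. -/
def RelWeaklyCompact (E : Type*) [NormedAddCommGroup E] [NormedSpace ℝ E] (A : Set E) : Prop :=
  IsCompact (closure ((toWeakSpace ℝ E) '' A))

section Defs
variable (E) [NormedAddCommGroup E] [Lattice E] [HasSolidNorm E] [IsOrderedAddMonoid E] [NormedSpace ℝ E]

/-- A set is almost order bounded if for every `ε > 0` it is contained in
`[-u,u] + ε B_E` for some positive `u`. -/
def AlmostOrderBounded (A : Set E) : Prop :=
  ∀ ε : ℝ, 0 < ε → ∃ u : E, 0 ≤ u ∧ A ⊆ Set.Icc (-u) u + Metric.closedBall (0 : E) ε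

/-- The norm is order continuous: every antitone net with infimum `0` is norm null. -/
def OrderContinuousNorm : Prop :=
  ∀ {ι : Type} [Nonempty ι] [SemilatticeSup ι] (x : ι → E),
    Antitone x → IsGLB (Set.range x) 0 →
      Tendsto (fun i => ‖x i‖) atTop (nhds 0)

/-- `e` is an order unit. -/
def IsOrderUnit (e : E) : Prop :=
  0 < e ∧ ∀ x : E, 0 ≤ x → ∃ n : ℕ, x ≤ n • e

/-- Dedekind complete: every nonempty set bounded above has a supremum. -/
def DedekindComplete : Prop :=
  ∀ s : Set E, s.Nonempty → BddAbove s → ∃ a, IsLUB s a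

/-- KB-space: every increasing norm bounded sequence of positives is norm convergent. -/
def KBSpace : Prop :=
  ∀ x : ℕ → E, Monotone x → (∀ n, 0 ≤ x n) → (∃ C, ∀ n, ‖x n‖ ≤ C) →
    ∃ y, Tendsto x atTop (nhds y)

/-- AL-space: additive norm on disjoint positive elements. -/
def IsALSpace : Prop :=
  ∀ x y : E, 0 ≤ x → 0 ≤ y → x ⊓ y = 0 → ‖x + y‖ = ‖x‖ + ‖y‖

/-- `e` is a weak unit. -/
def IsWeakUnit (e : E) : Prop :=
  0 < e ∧ ∀ x : E, 0 ≤ x → IsLUB (Set.range fun n : ℕ => x ⊓ n • e) x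

/-- Grothendieck space: weak* convergent sequences in the dual are weakly convergent. -/
def GrothendieckSpace (X : Type*) [NormedAddCommGroup X] [NormedSpace ℝ X] : Prop :=
  ∀ (f : ℕ → StrongDual ℝ X) (g : StrongDual ℝ X),
    (∀ x : X, Tendsto (fun n => f n x) atTop (nhds (g x))) →
    ∀ Φ : StrongDual ℝ (StrongDual ℝ X), Tendsto (fun n => Φ (f n)) atTop (nhds (Φ g))

end Defs

section OpDefs
variable [NormedAddCommGroup E] [Lattice E] [HasSolidNorm E] [IsOrderedAddMonoid E] [NormedSpace ℝ E]
variable [NormedAddCommGroup F] [Lattice F] [HasSolidNorm F] [IsOrderedAddMonoid F] [NormedSpace ℝ F]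

/-- An operator is almost order bounded if it maps almost order bounded sets to
almost order bounded sets. -/
def AlmostOrderBoundedOp (T : E →L[ℝ] F) : Prop :=
  ∀ A : Set E, AlmostOrderBounded E A → AlmostOrderBounded F (T '' A)

/-- An operator is almost order-weakly compact if it maps almost order bounded sets to
relatively weakly compact sets. -/
def AoWc (T : E →L[ℝ] F) : Prop :=
  ∀ A : Set E, AlmostOrderBounded E A → RelWeaklyCompact F (T '' A)

/-- Weakly compact operator. -/
def WeaklyCompactOp (T : E →L[ℝ] F) : Prop :=
  RelWeaklyCompact F (T '' Metric.closedBall 0 1)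

/-- Order weakly compact operator. -/
def OrderWeaklyCompactOp (T : E →L[ℝ] F) : Prop :=
  ∀ x : E, 0 ≤ x → RelWeaklyCompact F (T '' Set.Icc 0 x)

/-- Order bounded operator: maps order bounded sets to order bounded sets. -/
def OrderBoundedOp (T : E →L[ℝ] F) : Prop :=
  ∀ s : Set E, BddBelow s → BddAbove s → BddBelow (T '' s) ∧ BddAbove (T '' s)

/-- Semicompact operator. -/
def SemicompactOp (T : E →L[ℝ] F) : Prop :=
  ∀ ε : ℝ, 0 < ε → ∃ u : F, 0 ≤ u ∧ ∀ x ∈ Metric.closedBall (0 : E) 1, ‖(|T x| - u)⁺‖ ≤ ε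

/-- M-weakly compact operator. -/
def MWeaklyCompactOp (T : E →L[ℝ] F) : Prop :=
  ∀ x : ℕ → E, (∃ C, ∀ n, ‖x n‖ ≤ C) →
    (Pairwise fun n m => |x n| ⊓ |x m| = 0) →
    Tendsto (fun n => ‖T (x n)‖) atTop (nhds 0)

/-- L-weakly compact operator. -/
def LWeaklyCompactOp (T : E →L[ℝ] F) : Prop :=
  ∀ y : ℕ → F, (∀ n, ∃ w ∈ T '' Metric.closedBall (0 : E) 1, |y n| ≤ |w|) →
    (Pairwise fun n m => |y n| ⊓ |y m| = 0) →
    Tendsto (fun n => ‖y n‖) atTop (nhds 0)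

/-- Positive operator. -/
def PositiveOp (T : E →L[ℝ] F) : Prop := ∀ x : E, 0 ≤ x → 0 ≤ T x

/-- Lattice homomorphism. -/
def LatticeHomOp (T : E →L[ℝ] F) : Prop := ∀ x y : E, T (x ⊔ y) = T x ⊔ T y

/-- `S` is the modulus of `T`: the least upper bound of `T` and `-T` in the operator order. -/
def IsModulus (T S : E →L[ℝ] F) : Prop :=
  (∀ x : E, 0 ≤ x → T x ≤ S x ∧ -T x ≤ S x) ∧
  ∀ R : E →L[ℝ] F, (∀ x : E, 0 ≤ x → T x ≤ R x ∧ -T x ≤ R x) →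
    ∀ x : E, 0 ≤ x → S x ≤ R x

end OpDefs

section LatticeOrderedAddGroup
variable {α : Type*} [Lattice α] [AddCommGroup α] [IsOrderedAddMonoid α]

theorem posPart_abs_add_sub_le_abs {a b u : α} (ha : |a| ≤ u) : (|a + b| - u)⁺ ≤ |b| := by
  refine sup_le ?_ (abs_nonneg b)
  rw [sub_le_iff_le_add']
  exact (abs_add_le a b).trans (add_le_add ha le_rfl)

theorem inf_sup_neg_mem_Icc {u : α} (hu : 0 ≤ u) (x : α) : x ⊓ u ⊔ -u ∈ Set.Icc (-u) u :=
  ⟨le_sup_right, sup_le inf_le_right ((neg_nonpos.2 hu).trans hu)⟩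

theorem abs_sub_inf_sup_neg_le (x u : α) : |x - x ⊓ u ⊔ -u| ≤ (|x| - u)⁺ := by
  refine abs_le'.2 ⟨?_, ?_⟩
  · calc x - x ⊓ u ⊔ -u ≤ x - x ⊓ u := sub_le_sub_left le_sup_left x
      _ = (x - u)⁺ := by rw [sub_inf, sub_self, sup_comm]; rfl
      _ ≤ (|x| - u)⁺ := posPart_mono (sub_le_sub_right (le_abs_self x) u)
  · rw [neg_sub, sup_sub]
    refine sup_le ((sub_nonpos.2 inf_le_left).trans (posPart_nonneg _)) ?_
    calc -u - x = -x - u := by abel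
      _ ≤ (|x| - u)⁺ := (sub_le_sub_right (neg_le_abs x) u).trans (le_posPart _)

end LatticeOrderedAddGroup

section SolidNorm
variable [NormedAddCommGroup E] [Lattice E] [HasSolidNorm E] [IsOrderedAddMonoid E]

theorem norm_posPart_abs_add_sub_le {a b u : E} (ha : |a| ≤ u) : ‖(|a + b| - u)⁺‖ ≤ ‖b‖ :=
  norm_le_norm_of_abs_le_abs <| by
    rw [abs_of_nonneg (posPart_nonneg _)]; exact posPart_abs_add_sub_le_abs ha

theorem mem_Icc_add_closedBall_iff {u : E} (hu : 0 ≤ u) {ε : ℝ} {x : E} :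
    x ∈ Set.Icc (-u) u + Metric.closedBall 0 ε ↔ ‖(|x| - u)⁺‖ ≤ ε := by
  constructor
  · rintro ⟨a, ha, b, hb, rfl⟩
    have hau : |a| ≤ u := abs_le'.2 ⟨ha.2, neg_le.2 ha.1⟩
    exact (norm_posPart_abs_add_sub_le hau).trans (mem_closedBall_zero_iff.1 hb)
  · intro hx
    refine ⟨_, inf_sup_neg_mem_Icc hu x, _, ?_, add_sub_cancel _ x⟩
    refine mem_closedBall_zero_iff.2 ((norm_le_norm_of_abs_le_abs ?_).trans hx)
    rw [abs_of_nonneg (posPart_nonneg _)]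
    exact abs_sub_inf_sup_neg_le x u

end SolidNorm

theorem stmt0_general [NormedAddCommGroup E] [Lattice E] [HasSolidNorm E] [IsOrderedAddMonoid E] (A : Set E) (u : E) (hu : 0 ≤ u) (ε : ℝ) :
    A ⊆ Set.Icc (-u) u + Metric.closedBall (0 : E) ε ↔ ∀ x ∈ A, ‖(|x| - u)⁺‖ ≤ ε :=
  forall₂_congr fun _ _ => mem_Icc_add_closedBall_iff hu

theorem stmt0 [NormedAddCommGroup E] [Lattice E] [HasSolidNorm E] [IsOrderedAddMonoid E] [NormedSpace ℝ E] [CompleteSpace E] (A : Set E) (u : E) (hu : 0 ≤ u) (ε : ℝ) (hε : 0 < ε) :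
    A ⊆ Set.Icc (-u) u + Metric.closedBall (0 : E) ε ↔ ∀ x ∈ A, ‖(|x| - u)⁺‖ ≤ ε :=
  stmt0_general A u hu ε
end

section
/- Every semicompact operator T : E → F between Banach lattices is almost order bounded (i.e., maps almost order bounded sets to almost order bounded sets). -/
/-!
Truncating `T x` at `±u` leaves an error of modulus `(|T x| - u)⁺`, so a semicompact `T` maps the
unit ball into an almost order bounded set. An almost order bounded set is norm bounded, hence lies
in `n • B_E` for some `n : ℕ`, and almost order boundedness survives multiplication by `n`.
-/

open Filter Topology Pointwise NormedSpace

variable {E F G : Type*}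

section NormedLattice

variable [NormedAddCommGroup E] [Lattice E]

theorem mem_Icc_add_closedBall_of_norm_posPart_abs_sub_le [IsOrderedAddMonoid E] [HasSolidNorm E]
    {y u : E} {r : ℝ} (hu : 0 ≤ u) (h : ‖(|y| - u)⁺‖ ≤ r) :
    y ∈ Set.Icc (-u) u + Metric.closedBall 0 r := by
  set c := y ⊓ u ⊔ -u
  have hc : c ∈ Set.Icc (-u) u := ⟨le_sup_right, sup_le inf_le_right (neg_le_self hu)⟩
  have hyc : y - c ≤ (|y| - u)⁺ :=
    calc y - c ≤ y - y ⊓ u := sub_le_sub_left le_sup_left y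
      _ = (y - u)⁺ := by rw [sub_inf, sub_self, posPart_def, sup_comm]
      _ ≤ (|y| - u)⁺ := posPart_mono (sub_le_sub_right (le_abs_self y) u)
  have hcy : c - y ≤ (|y| - u)⁺ := by
    rw [sup_sub]
    refine sup_le (le_trans ?_ (posPart_nonneg _)) (le_trans ?_ (le_posPart _))
    · exact sub_nonpos.mpr inf_le_left
    · calc -u - y = -y - u := by abel
        _ ≤ |y| - u := sub_le_sub_right (neg_le_abs y) u
  refine ⟨c, hc, y - c, ?_, add_sub_cancel c y⟩
  rw [mem_closedBall_zero_iff]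
  refine le_trans (HasSolidNorm.solid ?_) h
  rw [abs_of_nonneg (posPart_nonneg _), abs_le']
  exact ⟨hyc, by rwa [neg_sub]⟩

theorem nsmul_mem_Icc_add_closedBall [IsOrderedAddMonoid E] {x u : E} {r : ℝ} (n : ℕ)
    (h : x ∈ Set.Icc (-u) u + Metric.closedBall 0 r) :
    n • x ∈ Set.Icc (-(n • u)) (n • u) + Metric.closedBall 0 (n * r) := by
  obtain ⟨a, ⟨hau, hua⟩, b, hb, rfl⟩ := h
  have ha : n • a ∈ Set.Icc (-(n • u)) (n • u) :=
    ⟨by simpa only [smul_neg] using nsmul_le_nsmul_right hau n, nsmul_le_nsmul_right hua n⟩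
  refine ⟨n • a, ha, n • b, ?_, (nsmul_add a b n).symm⟩
  rw [mem_closedBall_zero_iff] at hb ⊢
  calc ‖n • b‖ ≤ n * ‖b‖ := norm_nsmul_le
    _ ≤ n * r := by gcongr

theorem norm_le_of_mem_Icc_add_closedBall [IsOrderedAddMonoid E] [HasSolidNorm E] {x u : E}
    {r : ℝ} (hu : 0 ≤ u) (h : x ∈ Set.Icc (-u) u + Metric.closedBall 0 r) : ‖x‖ ≤ ‖u‖ + r := by
  obtain ⟨a, ⟨hau, hua⟩, b, hb, rfl⟩ := h
  have ha : ‖a‖ ≤ ‖u‖ :=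
    HasSolidNorm.solid (by rw [abs_of_nonneg hu]; exact abs_le'.mpr ⟨hua, neg_le.mp hau⟩)
  calc ‖a + b‖ ≤ ‖a‖ + ‖b‖ := norm_add_le a b
    _ ≤ ‖u‖ + r := add_le_add ha (mem_closedBall_zero_iff.mp hb)

namespace AlmostOrderBounded

variable {A B : Set E}

theorem mono (hB : AlmostOrderBounded E B) (hAB : A ⊆ B) : AlmostOrderBounded E A :=
  fun ε hε => (hB ε hε).imp fun _ hu => ⟨hu.1, hAB.trans hu.2⟩

theorem image_nsmul [IsOrderedAddMonoid E] (hA : AlmostOrderBounded E A) (n : ℕ) :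
    AlmostOrderBounded E ((n • ·) '' A) := by
  intro ε hε
  obtain ⟨u, hu, hAu⟩ := hA (ε / (n + 1)) (by positivity)
  refine ⟨n • u, nsmul_nonneg hu n, ?_⟩
  rintro _ ⟨x, hx, rfl⟩
  refine Set.add_subset_add_left (Metric.closedBall_subset_closedBall ?_)
    (nsmul_mem_Icc_add_closedBall n (hAu hx))
  rw [← mul_div_assoc, div_le_iff₀ (by positivity)]
  nlinarith

theorem exists_subset_image_nsmul_closedBall [IsOrderedAddMonoid E] [HasSolidNorm E]
    [NormedSpace ℝ E] (hA : AlmostOrderBounded E A) :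
    ∃ n : ℕ, A ⊆ (n • ·) '' Metric.closedBall (0 : E) 1 := by
  obtain ⟨u, hu, hAu⟩ := hA 1 one_pos
  obtain ⟨n, hn⟩ := exists_nat_ge (‖u‖ + 1)
  have hn₀ : (0 : ℝ) < n := by linarith [norm_nonneg u]
  refine ⟨n, fun x hx => ⟨(n : ℝ)⁻¹ • x, ?_, ?_⟩⟩
  · rw [mem_closedBall_zero_iff, norm_smul, norm_inv, Real.norm_natCast,
      inv_mul_le_iff₀ hn₀, mul_one]
    exact (norm_le_of_mem_Icc_add_closedBall hu (hAu hx)).trans hn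
  · change n • ((n : ℝ)⁻¹ • x) = x
    rw [← Nat.cast_smul_eq_nsmul ℝ, smul_inv_smul₀ hn₀.ne']

end AlmostOrderBounded

end NormedLattice

theorem SemicompactOp.almostOrderBounded_image_closedBall [NormedAddCommGroup E]
    [NormedSpace ℝ E] [NormedAddCommGroup F] [Lattice F] [IsOrderedAddMonoid F] [HasSolidNorm F]
    [NormedSpace ℝ F] {T : E →L[ℝ] F} (hT : SemicompactOp T) :
    AlmostOrderBounded F (T '' Metric.closedBall 0 1) := by
  intro ε hε
  obtain ⟨u, hu, hTu⟩ := hT ε hε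
  exact ⟨u, hu, Set.image_subset_iff.mpr fun x hx =>
    mem_Icc_add_closedBall_of_norm_posPart_abs_sub_le hu (hTu x hx)⟩

theorem stmt2_general [NormedAddCommGroup E] [Lattice E] [IsOrderedAddMonoid E] [HasSolidNorm E] [NormedSpace ℝ E] [NormedAddCommGroup F] [Lattice F] [IsOrderedAddMonoid F] [HasSolidNorm F] [NormedSpace ℝ F] (T : E →L[ℝ] F)
    (hT : SemicompactOp T) : AlmostOrderBoundedOp T := by
  intro A hA
  obtain ⟨n, hAn⟩ := hA.exists_subset_image_nsmul_closedBall
  refine (hT.almostOrderBounded_image_closedBall.image_nsmul n).mono ?_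
  calc T '' A ⊆ T '' ((n • ·) '' Metric.closedBall 0 1) := Set.image_mono hAn
    _ = (n • ·) '' (T '' Metric.closedBall 0 1) := by
      simp only [Set.image_image, map_nsmul]

theorem stmt2 [NormedAddCommGroup E] [Lattice E] [IsOrderedAddMonoid E] [HasSolidNorm E] [NormedSpace ℝ E] [CompleteSpace E] [NormedAddCommGroup F] [Lattice F] [IsOrderedAddMonoid F] [HasSolidNorm F] [NormedSpace ℝ F] [CompleteSpace F] (T : E →L[ℝ] F)
    (hT : SemicompactOp T) : AlmostOrderBoundedOp T :=
  stmt2_general T hT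
end

section
/- Every surjective lattice homomorphism T : E → F between Banach lattices is almost order bounded. -/
open Filter Topology Pointwise NormedSpace

variable {E F G : Type*}

theorem ContinuousLinearMap.image_closedBall_zero_subset {𝕜 : Type*} [NontriviallyNormedField 𝕜]
    [SeminormedAddCommGroup E] [NormedSpace 𝕜 E] [SeminormedAddCommGroup F] [NormedSpace 𝕜 F]
    (T : E →L[𝕜] F) (r : ℝ) : T '' Metric.closedBall 0 r ⊆ Metric.closedBall 0 (‖T‖ * r) := by
  simpa only [map_zero, coe_nnnorm] using (T.lipschitz.mapsTo_closedBall 0 r).image_subset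

section PositiveOperators
variable [NormedAddCommGroup E] [Lattice E] [NormedSpace ℝ E]
variable [NormedAddCommGroup F] [Lattice F] [NormedSpace ℝ F]

theorem LatticeHomOp.positiveOp {T : E →L[ℝ] F} (hT : LatticeHomOp T) : PositiveOp T := by
  intro x hx
  have h := hT x 0
  rw [sup_eq_left.mpr hx, map_zero] at h
  exact h ▸ le_sup_right

variable [IsOrderedAddMonoid E] [IsOrderedAddMonoid F]

theorem PositiveOp.monotone {T : E →L[ℝ] F} (hT : PositiveOp T) : Monotone T := by
  intro x y hxy
  simpa only [map_sub, sub_nonneg] using hT (y - x) (sub_nonneg.mpr hxy)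

theorem PositiveOp.image_Icc_neg_subset {T : E →L[ℝ] F} (hT : PositiveOp T) (u : E) :
    T '' Set.Icc (-u) u ⊆ Set.Icc (-T u) (T u) := by
  have h := hT.monotone.image_Icc_subset (a := -u) (b := u)
  rwa [map_neg] at h

theorem PositiveOp.almostOrderBoundedOp {T : E →L[ℝ] F} (hT : PositiveOp T) :
    AlmostOrderBoundedOp T := by
  intro A hA ε hε
  set δ := ε / (‖T‖ + 1)
  have hTδ : ‖T‖ * δ ≤ ε := by
    rw [mul_div_assoc', div_le_iff₀ (by positivity)]
    nlinarith [norm_nonneg T]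
  obtain ⟨u, hu, hAu⟩ := hA δ (by positivity)
  refine ⟨T u, hT u hu, ?_⟩
  calc T '' A ⊆ T '' (Set.Icc (-u) u + Metric.closedBall 0 δ) := Set.image_mono hAu
    _ = T '' Set.Icc (-u) u + T '' Metric.closedBall 0 δ := Set.image_add T
    _ ⊆ Set.Icc (-T u) (T u) + Metric.closedBall 0 ε :=
      Set.add_subset_add (hT.image_Icc_neg_subset u)
        ((T.image_closedBall_zero_subset δ).trans (Metric.closedBall_subset_closedBall hTδ))

end PositiveOperators

theorem stmt5_general [NormedAddCommGroup E] [Lattice E] [IsOrderedAddMonoid E] [NormedSpace ℝ E] [NormedAddCommGroup F] [Lattice F] [IsOrderedAddMonoid F] [NormedSpace ℝ F] (T : E →L[ℝ] F)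
    (hhom : LatticeHomOp T) : AlmostOrderBoundedOp T :=
  hhom.positiveOp.almostOrderBoundedOp

theorem stmt5 [NormedAddCommGroup E] [Lattice E] [HasSolidNorm E] [IsOrderedAddMonoid E] [NormedSpace ℝ E] [CompleteSpace E] [NormedAddCommGroup F] [Lattice F] [HasSolidNorm F] [IsOrderedAddMonoid F] [NormedSpace ℝ F] [CompleteSpace F] (T : E →L[ℝ] F)
    (hhom : LatticeHomOp T) (hsurj : Function.Surjective T) : AlmostOrderBoundedOp T :=
  stmt5_general T hhom
end
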